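/- The time map T(α) converges to π/(2√2) as α → 0⁺. -/

import Mathlib

/-!
Writing `cos 2x - cos 2α = 2 sin (α + x) sin (α - x)` and using `t (1 - α²) ≤ sin t ≤ t` for
`0 ≤ t ≤ 2α`, the integrand of `T(α)` is squeezed between `1 / √2` and `1 / (√2 (1 - α²))` times
`1 / √(α² - x²)`, whose integral over `[0, α]` is `π / 2` (an arcsine). Both bounds tend to
`π / (2√2)`.
-/

open Real Filter

/-- The time map `T(α) = ∫₀^α dx / √(cos 2x − cos 2α)`. -/
noncomputable def timeMapT (α : ℝ) : ℝ :=
  ∫ x in (0:ℝ)..α, 1 / Real.sqrt (Real.cos (2 * x) - Real.cos (2 * α))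

open MeasureTheory intervalIntegral Set

theorem hasDerivAt_arcsin_div {a x : ℝ} (ha : 0 < a) (hx : x ∈ Ioo (-a) a) :
    HasDerivAt (fun y => arcsin (y / a)) (1 / √(a ^ 2 - x ^ 2)) x := by
  have hxa : x / a ∈ Ioo (-1) 1 := by
    constructor
    · rw [lt_div_iff₀ ha]; linarith [hx.1]
    · rw [div_lt_one ha]; exact hx.2
  have hsqrt : √(a ^ 2 - x ^ 2) = a * √(1 - (x / a) ^ 2) := by
    rw [← sqrt_sq ha.le, ← sqrt_mul (sq_nonneg a), sqrt_sq ha.le]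
    congr 1
    field_simp
  refine ((hasDerivAt_arcsin hxa.1.ne' hxa.2.ne).comp x
    ((hasDerivAt_id x).div_const a)).congr_deriv ?_
  rw [hsqrt]
  field_simp

theorem intervalIntegrable_one_div_sqrt_sq_sub_sq {a : ℝ} (ha : 0 < a) :
    IntervalIntegrable (fun x => 1 / √(a ^ 2 - x ^ 2)) volume 0 a := by
  rw [intervalIntegrable_iff_integrableOn_Ioc_of_le ha.le]
  exact integrableOn_deriv_of_nonneg (by fun_prop)
    (fun x hx => hasDerivAt_arcsin_div ha ⟨by linarith [hx.1], hx.2⟩) fun _ _ => by positivity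

theorem integral_one_div_sqrt_sq_sub_sq {a : ℝ} (ha : 0 < a) :
    ∫ x in (0:ℝ)..a, 1 / √(a ^ 2 - x ^ 2) = π / 2 := by
  rw [integral_eq_sub_of_hasDerivAt_of_le ha.le (by fun_prop)
    (fun x hx => hasDerivAt_arcsin_div ha ⟨by linarith [hx.1], hx.2⟩)
    (intervalIntegrable_one_div_sqrt_sq_sub_sq ha)]
  simp [div_self ha.ne']

theorem one_div_sqrt_le_of_mul_le {m y v : ℝ} (hm : 0 < m) (hy : 0 < y) (h : m * y ≤ v) :
    1 / √v ≤ 1 / √m * (1 / √y) := by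
  rw [one_div_mul_one_div, ← sqrt_mul hm.le]
  exact one_div_le_one_div_of_le (by positivity) (sqrt_le_sqrt h)

theorem le_one_div_sqrt_of_le_mul {M y v : ℝ} (hy : 0 ≤ y) (hv : 0 < v) (h : v ≤ M * y) :
    1 / √M * (1 / √y) ≤ 1 / √v := by
  rw [one_div_mul_one_div, ← sqrt_mul' M hy]
  exact one_div_le_one_div_of_le (sqrt_pos.2 hv) (sqrt_le_sqrt h)

section Comparison

variable {f : ℝ → ℝ} {a m : ℝ}

theorem intervalIntegrable_one_div_sqrt_of_mul_sq_sub_sq_le (ha : 0 < a) (hm : 0 < m)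
    (hf : Measurable f) (hlow : ∀ x ∈ Ioo 0 a, m * (a ^ 2 - x ^ 2) ≤ f x) :
    IntervalIntegrable (fun x => 1 / √(f x)) volume 0 a := by
  have hbound := (intervalIntegrable_one_div_sqrt_sq_sub_sq ha).const_mul (1 / √m)
  rw [intervalIntegrable_iff_integrableOn_Ioo_of_le ha.le] at hbound ⊢
  refine hbound.mono' (by fun_prop : Measurable fun x => 1 / √(f x)).aestronglyMeasurable
    ((ae_restrict_iff' measurableSet_Ioo).2 (Eventually.of_forall fun x hx => ?_))
  rw [norm_of_nonneg (by positivity)]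
  exact one_div_sqrt_le_of_mul_le hm (by nlinarith [hx.1, hx.2]) (hlow x hx)

theorem integral_one_div_sqrt_le_of_mul_sq_sub_sq_le (ha : 0 < a) (hm : 0 < m)
    (hf : Measurable f) (hlow : ∀ x ∈ Ioo 0 a, m * (a ^ 2 - x ^ 2) ≤ f x) :
    ∫ x in (0:ℝ)..a, 1 / √(f x) ≤ π / 2 / √m := by
  calc ∫ x in (0:ℝ)..a, 1 / √(f x)
      ≤ ∫ x in (0:ℝ)..a, 1 / √m * (1 / √(a ^ 2 - x ^ 2)) :=
        integral_mono_on_of_le_Ioo ha.le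
          (intervalIntegrable_one_div_sqrt_of_mul_sq_sub_sq_le ha hm hf hlow)
          ((intervalIntegrable_one_div_sqrt_sq_sub_sq ha).const_mul _)
          fun x hx => one_div_sqrt_le_of_mul_le hm (by nlinarith [hx.1, hx.2]) (hlow x hx)
    _ = π / 2 / √m := by
      rw [intervalIntegral.integral_const_mul, integral_one_div_sqrt_sq_sub_sq ha]
      ring

theorem div_sqrt_le_integral_one_div_sqrt_of_le_mul_sq_sub_sq {M : ℝ} (ha : 0 < a) (hm : 0 < m)
    (hf : Measurable f) (hlow : ∀ x ∈ Ioo 0 a, m * (a ^ 2 - x ^ 2) ≤ f x)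
    (hup : ∀ x ∈ Ioo 0 a, f x ≤ M * (a ^ 2 - x ^ 2)) :
    π / 2 / √M ≤ ∫ x in (0:ℝ)..a, 1 / √(f x) := by
  calc π / 2 / √M = ∫ x in (0:ℝ)..a, 1 / √M * (1 / √(a ^ 2 - x ^ 2)) := by
        rw [intervalIntegral.integral_const_mul, integral_one_div_sqrt_sq_sub_sq ha]
        ring
    _ ≤ ∫ x in (0:ℝ)..a, 1 / √(f x) :=
        integral_mono_on_of_le_Ioo ha.le
          ((intervalIntegrable_one_div_sqrt_sq_sub_sq ha).const_mul _)
          (intervalIntegrable_one_div_sqrt_of_mul_sq_sub_sq_le ha hm hf hlow)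
          fun x hx => by
            have hpos : 0 < a ^ 2 - x ^ 2 := by nlinarith [hx.1, hx.2]
            exact le_one_div_sqrt_of_le_mul hpos.le
              ((mul_pos hm hpos).trans_le (hlow x hx)) (hup x hx)

end Comparison

theorem cos_two_mul_sub_cos_two_mul (x y : ℝ) :
    cos (2 * x) - cos (2 * y) = 2 * sin (y + x) * sin (y - x) := by
  rw [cos_sub_cos, show (2 * x - 2 * y) / 2 = -(y - x) by ring, sin_neg]
  ring_nf

theorem mul_one_sub_sq_le_sin {t a : ℝ} (ht : 0 ≤ t) (hta : t ≤ 2 * a) :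
    t * (1 - a ^ 2) ≤ sin t := by
  have hsq : t ^ 2 ≤ 4 * a ^ 2 := by nlinarith
  nlinarith [sin_ge_sub_cube ht, mul_le_mul_of_nonneg_left hsq ht]

theorem cos_two_mul_sub_cos_two_mul_le {x a : ℝ} (hx : 0 ≤ x) (hxa : x ≤ a) (ha : a ≤ 1) :
    cos (2 * x) - cos (2 * a) ≤ 2 * (a ^ 2 - x ^ 2) := by
  have hminus := mul_one_sub_sq_le_sin (t := a - x) (a := a) (by linarith) (by linarith)
  have hsin : 0 ≤ sin (a - x) := (mul_nonneg (by linarith) (by nlinarith)).trans hminus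
  have hprod := mul_le_mul (sin_le (by linarith : 0 ≤ a + x)) (sin_le (by linarith : 0 ≤ a - x))
    hsin (by linarith)
  rw [cos_two_mul_sub_cos_two_mul]
  nlinarith

theorem le_cos_two_mul_sub_cos_two_mul {x a : ℝ} (hx : 0 ≤ x) (hxa : x ≤ a) (ha : a ≤ 1) :
    2 * (1 - a ^ 2) ^ 2 * (a ^ 2 - x ^ 2) ≤ cos (2 * x) - cos (2 * a) := by
  have hplus := mul_one_sub_sq_le_sin (t := a + x) (a := a) (by linarith) (by linarith)
  have hminus := mul_one_sub_sq_le_sin (t := a - x) (a := a) (by linarith) (by linarith)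
  have hfac : 0 ≤ 1 - a ^ 2 := by nlinarith
  have hprod := mul_le_mul hplus hminus (mul_nonneg (by linarith) hfac)
    ((mul_nonneg (by linarith) hfac).trans hplus)
  rw [cos_two_mul_sub_cos_two_mul]
  nlinarith

theorem timeMapT_mem_Icc {α : ℝ} (hα : α ∈ Ioo 0 1) :
    timeMapT α ∈ Icc (π / 2 / √2) (π / 2 / √(2 * (1 - α ^ 2) ^ 2)) := by
  have hm : 0 < 2 * (1 - α ^ 2) ^ 2 := by
    have : 0 < 1 - α ^ 2 := by nlinarith [hα.1, hα.2]
    positivity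
  have hf : Measurable fun x => cos (2 * x) - cos (2 * α) := by fun_prop
  have hlow : ∀ x ∈ Ioo 0 α,
      2 * (1 - α ^ 2) ^ 2 * (α ^ 2 - x ^ 2) ≤ cos (2 * x) - cos (2 * α) :=
    fun x hx => le_cos_two_mul_sub_cos_two_mul hx.1.le hx.2.le hα.2.le
  exact ⟨div_sqrt_le_integral_one_div_sqrt_of_le_mul_sq_sub_sq hα.1 hm hf hlow
      fun x hx => cos_two_mul_sub_cos_two_mul_le hx.1.le hx.2.le hα.2.le,
    integral_one_div_sqrt_le_of_mul_sq_sub_sq_le hα.1 hm hf hlow⟩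

theorem timeMapT_tendsto_zero :
    Tendsto timeMapT (nhdsWithin 0 (Set.Ioi 0)) (nhds (π / (2 * Real.sqrt 2))) := by
  have hupper : Tendsto (fun α : ℝ => π / 2 / √(2 * (1 - α ^ 2) ^ 2)) (nhdsWithin 0 (Ioi 0))
      (nhds (π / 2 / √2)) := by
    have hcont : ContinuousAt (fun α : ℝ => π / 2 / √(2 * (1 - α ^ 2) ^ 2)) 0 :=
      continuousAt_const.div (by fun_prop) (by norm_num)
    simpa using hcont.tendsto.mono_left nhdsWithin_le_nhds
  rw [← div_div]
  have hnear : Ioo (0 : ℝ) 1 ∈ nhdsWithin 0 (Ioi 0) := Ioo_mem_nhdsGT one_pos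
  refine tendsto_of_tendsto_of_tendsto_of_le_of_le' tendsto_const_nhds hupper ?_ ?_
  · filter_upwards [hnear] with α hα using (timeMapT_mem_Icc hα).1
  · filter_upwards [hnear] with α hα using (timeMapT_mem_Icc hα).2
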